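/- arXiv:1908.06334 — 2 statements merged into one kernel-verified Lean document; each statement's English description precedes it below -/
import Mathlib

section
/- (Lemma 3.1.) Let n be a natural number, let A be a real positive semidefinite (n+1)×(n+1) matrix (indices over Fin n ⊕ Unit, with 'last' the final index), and suppose A(last, last) = 1. If for some index i ∈ Fin n one has A(i,i) = A(i, last) (i.e., A satisfies the constraint Tr(A U_i) = 0 of the SDP (P1′)), then 0 ≤ A(i, last) ≤ 1. (In particular, the optimal solution A* of the SDP (P1′) satisfies A*(i, N+1) ∈ [0,1] for every i, which justifies the rounding rule I_i^{app} = round(A*(i, N+1)).) -/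
open Matrix

theorem Matrix.PosSemidef.apply_mul_apply_le {ι : Type*} [Fintype ι]
    {A : Matrix ι ι ℝ} (hA : A.PosSemidef) (j k : ι) :
    A j k * A j k ≤ A j j * A k k := by
  have hminor := (hA.submatrix ![j, k]).det_nonneg
  rw [det_fin_two] at hminor
  have hsymm : A k j = A j k := by simpa using hA.1.apply j k
  simp only [submatrix_apply, Matrix.cons_val_zero, Matrix.cons_val_one, hsymm] at hminor
  linarith

/-- Lemma 3.1: if `A ⪰ 0`, `A(last,last) = 1`, and `A(i,i) = A(i,last)`
(the SDP constraint `Tr(A U_i) = 0`), then `0 ≤ A(i,last) ≤ 1`. -/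
theorem sdp_solution_entry_in_unit_interval (n : ℕ)
    (A : Matrix (Fin n ⊕ Unit) (Fin n ⊕ Unit) ℝ) (hA : A.PosSemidef)
    (hlast : A (Sum.inr ()) (Sum.inr ()) = 1) (i : Fin n)
    (hdiag : A (Sum.inl i) (Sum.inl i) = A (Sum.inl i) (Sum.inr ())) :
    0 ≤ A (Sum.inl i) (Sum.inr ()) ∧ A (Sum.inl i) (Sum.inr ()) ≤ 1 := by
  have hnonneg : 0 ≤ A (Sum.inl i) (Sum.inr ()) := hdiag ▸ hA.diag_nonneg
  have hminor := hA.apply_mul_apply_le (Sum.inl i) (Sum.inr ())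
  rw [hdiag, hlast, mul_one] at hminor
  exact ⟨hnonneg, by nlinarith⟩
end

section
/- Let n be a natural number and let A be a real positive semidefinite (n+1)×(n+1) matrix (indices over Fin n ⊕ Unit, with 'last' the final index) such that rank(A) = 1, A(last, last) = 1, and A(i,i) = A(i, last) for every i ∈ Fin n. Then there exists a vector x ∈ ℝⁿ with x_i ∈ {0,1} for all i such that A = a aᵀ where a = [x; 1]; moreover A(i, last) = x_i for every i. (When the SDR solution A* is rank-one, the relaxation is tight: the binary caching decisions are recovered exactly as I_i = A*(i, N+1).) -/
/-!
A matrix of rank at most one has all its `2 × 2` minors zero, so a symmetric one with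
`A(c, c) = 1` is the outer product of its `c`-th column with itself. For the lifted matrix
the diagonal constraint then reads `x_i ^ 2 = x_i`, which forces `x_i ∈ {0, 1}`.
-/

open Matrix

namespace Matrix

variable {m n K : Type*} [Fintype n] [Field K]

theorem mul_apply_eq_mul_apply_of_rank_le_one {A : Matrix m n K} (hA : A.rank ≤ 1)
    (i k : m) (j l : n) : A i j * A k l = A i l * A k j := by
  classical
  obtain ⟨v, hv⟩ := finrank_le_one_iff.mp hA
  have hcol : ∀ j, ∃ c : K, ∀ i, A i j = c * (v : m → K) i := fun j => by
    obtain ⟨c, hc⟩ := hv ⟨A *ᵥ Pi.single j 1, Pi.single j 1, rfl⟩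
    refine ⟨c, fun i => ?_⟩
    simpa [mulVec_single] using (congrFun (congrArg Subtype.val hc) i).symm
  obtain ⟨c, hc⟩ := hcol j
  obtain ⟨d, hd⟩ := hcol l
  rw [hc, hc, hd, hd]
  ring

theorem eq_vecMulVec_of_rank_le_one_of_isSymm {A : Matrix n n K} (hA : A.rank ≤ 1)
    (hsymm : A.IsSymm) {c : n} (hc : A c c = 1) :
    A = vecMulVec (fun i => A i c) (fun i => A i c) := by
  ext i j
  have h := mul_apply_eq_mul_apply_of_rank_le_one hA i c j c
  rw [hc, mul_one, ← hsymm.apply c j] at h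
  rw [vecMulVec_apply, h]

end Matrix

/-- When the SDR solution is rank-one, the relaxation is tight: a positive
semidefinite `(n+1)×(n+1)` matrix `A` of rank one with `A(last,last) = 1` and
`A(i,i) = A(i,last)` for all `i` is the lift `A = a aᵀ` of a binary vector
`x` via `a = [x; 1]`, and the caching decisions are recovered as
`x_i = A(i, last)`. -/
theorem rank_one_sdr_recovers_binary_vector (n : ℕ)
    (A : Matrix (Fin n ⊕ Unit) (Fin n ⊕ Unit) ℝ) (hA : A.PosSemidef)
    (hrank : A.rank = 1) (hlast : A (Sum.inr ()) (Sum.inr ()) = 1)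
    (hdiag : ∀ i : Fin n, A (Sum.inl i) (Sum.inl i) = A (Sum.inl i) (Sum.inr ())) :
    ∃ x : Fin n → ℝ, (∀ i, x i = 0 ∨ x i = 1) ∧
      A = Matrix.vecMulVec (Sum.elim x (fun _ => (1 : ℝ)))
            (Sum.elim x (fun _ => (1 : ℝ))) ∧
      ∀ i : Fin n, A (Sum.inl i) (Sum.inr ()) = x i := by
  set x : Fin n → ℝ := fun i => A (Sum.inl i) (Sum.inr ())
  have hfactor := eq_vecMulVec_of_rank_le_one_of_isSymm hrank.le hA.isHermitian hlast
  have hlift : Sum.elim x (fun _ => 1) = fun i => A i (Sum.inr ()) := by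
    ext (i | ⟨⟩)
    exacts [rfl, hlast.symm]
  refine ⟨x, fun i => IsIdempotentElem.iff_eq_zero_or_one.mp ?_, hlift ▸ hfactor, fun i => rfl⟩
  calc x i * x i = A (Sum.inl i) (Sum.inl i) := by rw [hfactor]; rfl
    _ = x i := hdiag i
end
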